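/- arXiv:1612.02799 — 3 statements merged into one kernel-verified Lean document; each statement's English description precedes it below -/
import Mathlib

section
/- Let s, z ∈ ℂ with s ≠ 0, z ≠ 2, and s² + s^{-2} ≠ z. Let m be an integer and suppose that (s² + s^{-2} + 2 − z)·(S_m(z)² + S_{m-1}(z)²) − 2·(s² + s^{-2})·S_m(z)·S_{m-1}(z) = z. Then S_m(z)² + S_{m-1}(z)² = (z² − 2(s² + s^{-2}))/((z − 2)(s² + s^{-2} − z)). -/
/-! The quantity `S j ^ 2 + S (j - 1) ^ 2 - z * S j * S (j - 1)` is invariant along any solution of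
the recurrence `S j = z * S (j - 1) - S (j - 2)`, and equals `1` for the Chebyshev polynomials.
Taking `z` times the hypothesis minus `2 (s² + s⁻²)` times this identity eliminates the cross term
`S m * S (m - 1)`, leaving a linear equation for `S m ^ 2 + S (m - 1) ^ 2`. -/

section Recurrence

variable {R : Type*} [CommRing R] {z : R} {S : ℤ → R}

theorem sq_add_sq_sub_mul_succ_eq (hrec : ∀ j : ℤ, S j = z * S (j - 1) - S (j - 2)) (j : ℤ) :
    S (j + 1) ^ 2 + S j ^ 2 - z * S (j + 1) * S j
      = S j ^ 2 + S (j - 1) ^ 2 - z * S j * S (j - 1) := by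
  have h := hrec (j + 1)
  rw [add_sub_cancel_right, show j + 1 - 2 = j - 1 by ring] at h
  linear_combination (S (j + 1) - S (j - 1)) * h

theorem sq_add_sq_sub_mul_eq_of_recurrence (hrec : ∀ j : ℤ, S j = z * S (j - 1) - S (j - 2))
    (j : ℤ) :
    S j ^ 2 + S (j - 1) ^ 2 - z * S j * S (j - 1)
      = S 0 ^ 2 + S (-1) ^ 2 - z * S 0 * S (-1) := by
  have hper : Function.Periodic (fun j : ℤ ↦ S j ^ 2 + S (j - 1) ^ 2 - z * S j * S (j - 1)) 1 :=
    fun j ↦ by simpa using sq_add_sq_sub_mul_succ_eq hrec j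
  simpa using hper.int_mul_eq j

theorem chebyshev_sq_add_sq_sub_mul (hS0 : S 0 = 1) (hS1 : S 1 = z)
    (hrec : ∀ j : ℤ, S j = z * S (j - 1) - S (j - 2)) (j : ℤ) :
    S j ^ 2 + S (j - 1) ^ 2 - z * S j * S (j - 1) = 1 := by
  have hneg : S (-1) = 0 := by
    have h := hrec 1
    norm_num [hS0, hS1] at h
    linear_combination h
  rw [sq_add_sq_sub_mul_eq_of_recurrence hrec, hS0, hneg]
  ring

end Recurrence

theorem stmt6_general (s z : ℂ) (hz : z ≠ 2)
    (hsz : s ^ (2 : ℤ) + s ^ (-2 : ℤ) ≠ z)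
    (S : ℤ → ℂ) (hS0 : S 0 = 1) (hS1 : S 1 = z)
    (hrec : ∀ j : ℤ, S j = z * S (j - 1) - S (j - 2))
    (m : ℤ)
    (heq : (s ^ (2 : ℤ) + s ^ (-2 : ℤ) + 2 - z) * ((S m) ^ 2 + (S (m - 1)) ^ 2)
      - 2 * (s ^ (2 : ℤ) + s ^ (-2 : ℤ)) * S m * S (m - 1) = z) :
    (S m) ^ 2 + (S (m - 1)) ^ 2
      = (z ^ 2 - 2 * (s ^ (2 : ℤ) + s ^ (-2 : ℤ)))
        / ((z - 2) * (s ^ (2 : ℤ) + s ^ (-2 : ℤ) - z)) := by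
  have hinv := chebyshev_sq_add_sq_sub_mul hS0 hS1 hrec m
  set w := s ^ (2 : ℤ) + s ^ (-2 : ℤ)
  have hz2 : z - 2 ≠ 0 := sub_ne_zero.mpr hz
  have hwz : w - z ≠ 0 := sub_ne_zero.mpr hsz
  rw [eq_div_iff (mul_ne_zero hz2 hwz)]
  linear_combination z * heq - 2 * w * hinv

theorem stmt6 (s z : ℂ) (hs : s ≠ 0) (hz : z ≠ 2)
    (hsz : s ^ (2 : ℤ) + s ^ (-2 : ℤ) ≠ z)
    (S : ℤ → ℂ) (hS0 : S 0 = 1) (hS1 : S 1 = z)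
    (hrec : ∀ j : ℤ, S j = z * S (j - 1) - S (j - 2))
    (m : ℤ)
    (heq : (s ^ (2 : ℤ) + s ^ (-2 : ℤ) + 2 - z) * ((S m) ^ 2 + (S (m - 1)) ^ 2)
      - 2 * (s ^ (2 : ℤ) + s ^ (-2 : ℤ)) * S m * S (m - 1) = z) :
    (S m) ^ 2 + (S (m - 1)) ^ 2
      = (z ^ 2 - 2 * (s ^ (2 : ℤ) + s ^ (-2 : ℤ)))
        / ((z - 2) * (s ^ (2 : ℤ) + s ^ (-2 : ℤ) - z)) :=
  stmt6_general s z hz hsz S hS0 hS1 hrec m heq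
end

section
/- Let s, z ∈ ℂ with s ≠ 0, z ≠ 2, and s² + s^{-2} ≠ z. Let m be an integer and suppose (s² + s^{-2} + 2 − z)·(S_m(z)² + S_{m-1}(z)²) − 2·(s² + s^{-2})·S_m(z)·S_{m-1}(z) = z. Then (S_m(z) − s²·S_{m-1}(z))·(S_m(z) − s^{-2}·S_{m-1}(z)) = (s² + s^{-2} − z)/(z − 2). -/
/-!
The quadratic form `Q(x, y) = x² + y² - z x y` is invariant under the shift
`(x, y) ↦ (z x - y, x)` of the Chebyshev recurrence, so `Q(S_m, S_{m-1}) = Q(S_0, S_{-1}) = 1`.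
Since `s² s⁻² = 1`, the left-hand side of the claim is `S_m² + S_{m-1}² - (s² + s⁻²) S_m S_{m-1}`,
and together with the invariant the hypothesis on `m` is a linear system in
`S_m² + S_{m-1}²` and `S_m S_{m-1}` that determines it.
-/

section ChebyshevRecurrence

variable {R : Type*} [CommRing R] {z : R} {S : ℤ → R}

theorem chebyshev_invariant_periodic (hrec : ∀ j : ℤ, S j = z * S (j - 1) - S (j - 2)) :
    Function.Periodic (fun k ↦ S k ^ 2 + S (k - 1) ^ 2 - z * S k * S (k - 1)) 1 := by
  intro k
  have h := hrec (k + 1)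
  simp only [add_sub_cancel_right, show k + 1 - 2 = k - 1 by ring] at h ⊢
  rw [h]
  ring

theorem chebyshev_invariant_eq_one (hS0 : S 0 = 1) (hS1 : S 1 = z)
    (hrec : ∀ j : ℤ, S j = z * S (j - 1) - S (j - 2)) (k : ℤ) :
    S k ^ 2 + S (k - 1) ^ 2 - z * S k * S (k - 1) = 1 := by
  have hSm1 : S (-1) = 0 := by
    have h := hrec 1
    norm_num [hS0, hS1] at h
    linear_combination h
  simpa [hS0, hSm1] using (chebyshev_invariant_periodic hrec).int_mul_eq k

end ChebyshevRecurrence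

theorem sub_mul_eq_div_of_sub_mul_eq_one {K : Type*} [Field K] {x y z t : K} (hz : z ≠ 2)
    (hinv : x - z * y = 1) (h : (t + 2 - z) * x - 2 * t * y = z) :
    x - t * y = (t - z) / (z - 2) := by
  rw [eq_div_iff (sub_ne_zero.mpr hz)]
  linear_combination t * hinv - h

theorem stmt8_general (s z : ℂ) (hs : s ≠ 0) (hz : z ≠ 2)
    (S : ℤ → ℂ) (hS0 : S 0 = 1) (hS1 : S 1 = z)
    (hrec : ∀ j : ℤ, S j = z * S (j - 1) - S (j - 2))
    (m : ℤ)
    (heq : (s ^ (2 : ℤ) + s ^ (-2 : ℤ) + 2 - z) * ((S m) ^ 2 + (S (m - 1)) ^ 2)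
      - 2 * (s ^ (2 : ℤ) + s ^ (-2 : ℤ)) * S m * S (m - 1) = z) :
    (S m - s ^ (2 : ℤ) * S (m - 1)) * (S m - s ^ (-2 : ℤ) * S (m - 1))
      = (s ^ (2 : ℤ) + s ^ (-2 : ℤ) - z) / (z - 2) := by
  have hprod : s ^ (2 : ℤ) * s ^ (-2 : ℤ) = 1 := by
    rw [← zpow_add₀ hs]
    norm_num
  have hlhs : (S m - s ^ (2 : ℤ) * S (m - 1)) * (S m - s ^ (-2 : ℤ) * S (m - 1))
      = S m ^ 2 + S (m - 1) ^ 2 - (s ^ (2 : ℤ) + s ^ (-2 : ℤ)) * (S m * S (m - 1)) := by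
    linear_combination S (m - 1) ^ 2 * hprod
  rw [hlhs]
  refine sub_mul_eq_div_of_sub_mul_eq_one hz ?_ (by linear_combination heq)
  linear_combination chebyshev_invariant_eq_one hS0 hS1 hrec m

theorem stmt8 (s z : ℂ) (hs : s ≠ 0) (hz : z ≠ 2)
    (hsz : s ^ (2 : ℤ) + s ^ (-2 : ℤ) ≠ z)
    (S : ℤ → ℂ) (hS0 : S 0 = 1) (hS1 : S 1 = z)
    (hrec : ∀ j : ℤ, S j = z * S (j - 1) - S (j - 2))
    (m : ℤ)
    (heq : (s ^ (2 : ℤ) + s ^ (-2 : ℤ) + 2 - z) * ((S m) ^ 2 + (S (m - 1)) ^ 2)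
      - 2 * (s ^ (2 : ℤ) + s ^ (-2 : ℤ)) * S m * S (m - 1) = z) :
    (S m - s ^ (2 : ℤ) * S (m - 1)) * (S m - s ^ (-2 : ℤ) * S (m - 1))
      = (s ^ (2 : ℤ) + s ^ (-2 : ℤ) - z) / (z - 2) :=
  stmt8_general s z hs hz S hS0 hS1 hrec m heq
end

section
/- Let s, z ∈ ℂ with s ≠ 0, z ≠ 2, s² + s^{-2} ≠ z, and S_m(z) ≠ s²·S_{m-1}(z). Let m be an integer and suppose (s² + s^{-2} + 2 − z)·(S_m(z)² + S_{m-1}(z)²) − 2·(s² + s^{-2})·S_m(z)·S_{m-1}(z) = z. Setting w = (S_m(z) − S_{m-1}(z))·(S_m(z) − s^{-2}·S_{m-1}(z)), one has w² = (S_m(z) − s^{-2}·S_{m-1}(z))/(S_m(z) − s²·S_{m-1}(z)). -/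
/-!
The sequence `S` is Mathlib's rescaled Chebyshev polynomial `Chebyshev.S` evaluated at `z`, so
`a = S m`, `b = S (m - 1)` satisfy `a² + b² - z a b = 1`. Together with the hypothesis on `s`
this gives `(a - b)² (a - s⁻² b)(a - s² b) = 1`, which is `w² (a - s² b) = a - s⁻² b`.
-/

open Polynomial

theorem Polynomial.Chebyshev.eq_S_eval_of_recurrence {R : Type*} [CommRing R] {z : R}
    {f : ℤ → R} (h0 : f 0 = 1) (h1 : f 1 = z) (hrec : ∀ j, f j = z * f (j - 1) - f (j - 2))
    (n : ℤ) : f n = (Chebyshev.S R n).eval z := by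
  induction n using Polynomial.Chebyshev.induct with
  | zero => simp [h0]
  | one => simp [h1]
  | add_two n ih1 ih2 =>
    have h := hrec (n + 2)
    rw [show (n : ℤ) + 2 - 1 = n + 1 by ring, show (n : ℤ) + 2 - 2 = n by ring] at h
    rw [h, Chebyshev.S_add_two, eval_sub, eval_mul, eval_X, ih1, ih2]
  | neg_add_one n ih1 ih2 =>
    have h := hrec (-n + 1)
    rw [show -(n : ℤ) + 1 - 1 = -n by ring, show -(n : ℤ) + 1 - 2 = -n - 1 by ring] at h
    rw [Chebyshev.S_sub_one, eval_sub, eval_mul, eval_X, ← ih1, ← ih2]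
    linear_combination h

/-- With `p = a² + b²` and `q = a b`, eliminating `z` between the two relations leaves
`(p - 2q)(p - (u + v)q) = 1`, and `p - (u + v)q` factors since `u v = 1`. -/
theorem sub_sq_mul_sub_mul_mul_sub_mul_eq_one {R : Type*} [CommRing R] {a b z u v : R}
    (huv : u * v = 1) (hab : b ^ 2 + a ^ 2 - z * b * a = 1)
    (h : (u + v + 2 - z) * (a ^ 2 + b ^ 2) - 2 * (u + v) * a * b = z) :
    (a - b) ^ 2 * (a - v * b) * (a - u * b) = 1 := by
  linear_combination (-(a * b)) * h + (a ^ 2 + b ^ 2 + 1) * hab + (a - b) ^ 2 * b ^ 2 * huv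

theorem stmt10_general (s z : ℂ) (hs : s ≠ 0)
    (S : ℤ → ℂ) (hS0 : S 0 = 1) (hS1 : S 1 = z)
    (hrec : ∀ j : ℤ, S j = z * S (j - 1) - S (j - 2))
    (m : ℤ)
    (hne : S m ≠ s ^ (2 : ℤ) * S (m - 1))
    (heq : (s ^ (2 : ℤ) + s ^ (-2 : ℤ) + 2 - z) * ((S m) ^ 2 + (S (m - 1)) ^ 2)
      - 2 * (s ^ (2 : ℤ) + s ^ (-2 : ℤ)) * S m * S (m - 1) = z)
    (w : ℂ) (hw : w = (S m - S (m - 1)) * (S m - s ^ (-2 : ℤ) * S (m - 1))) :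
    w ^ 2 = (S m - s ^ (-2 : ℤ) * S (m - 1)) / (S m - s ^ (2 : ℤ) * S (m - 1)) := by
  have hS := Chebyshev.eq_S_eval_of_recurrence hS0 hS1 hrec
  have hinv : S (m - 1) ^ 2 + S m ^ 2 - z * S (m - 1) * S m = 1 := by
    simpa [hS] using congrArg (eval z) (Chebyshev.S_sq_add_S_sq ℂ (m - 1))
  have huv : s ^ (2 : ℤ) * s ^ (-2 : ℤ) = 1 := by rw [← zpow_add₀ hs]; simp
  have key := sub_sq_mul_sub_mul_mul_sub_mul_eq_one huv hinv heq
  rw [hw, eq_div_iff (sub_ne_zero_of_ne hne)]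
  linear_combination (S m - s ^ (-2 : ℤ) * S (m - 1)) * key

theorem stmt10 (s z : ℂ) (hs : s ≠ 0) (hz : z ≠ 2)
    (hsz : s ^ (2 : ℤ) + s ^ (-2 : ℤ) ≠ z)
    (S : ℤ → ℂ) (hS0 : S 0 = 1) (hS1 : S 1 = z)
    (hrec : ∀ j : ℤ, S j = z * S (j - 1) - S (j - 2))
    (m : ℤ)
    (hne : S m ≠ s ^ (2 : ℤ) * S (m - 1))
    (heq : (s ^ (2 : ℤ) + s ^ (-2 : ℤ) + 2 - z) * ((S m) ^ 2 + (S (m - 1)) ^ 2)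
      - 2 * (s ^ (2 : ℤ) + s ^ (-2 : ℤ)) * S m * S (m - 1) = z)
    (w : ℂ) (hw : w = (S m - S (m - 1)) * (S m - s ^ (-2 : ℤ) * S (m - 1))) :
    w ^ 2 = (S m - s ^ (-2 : ℤ) * S (m - 1)) / (S m - s ^ (2 : ℤ) * S (m - 1)) :=
  stmt10_general s z hs S hS0 hS1 hrec m hne heq w hw
end
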